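/- Let H ∈ C⁰([0,∞);ℝ) ∩ L¹((0,∞)), α_i > 0, β_i ∈ [0,1) for i = 1,…,m, and C > 0. Let F ∈ C¹((0,∞)) ∩ C⁰([0,∞)) satisfy F ≥ 0, F(0) ≤ C, and |F'(t)| ≤ C Σ_i ⟨t⟩^{α_i} F(t)^{β_i} + H(t) F(t) for t > 0. Then there exists K = K(α_i, β_i, H, C) > 0 such that F(t) ≤ max_{i} (K + Km⟨t⟩^{α_i+1})^{1/(1−β_i)} for all t > 0. -/

import Mathlib

open MeasureTheory Filter Set

/-!
Gronwall's integrating factor `G = F · exp (-∫₀ᵗ |H|)` absorbs the linear term: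
`G' ≤ C ∑ ⟨t⟩^{αᵢ} G^{βᵢ}`, since `βᵢ ≤ 1` and the exponent is nonpositive. If `M` is the
maximum of `G` on `[0, T]`, the mean value inequality gives `M ≤ C + C ∑ ⟨T⟩^{αᵢ+1} M^{βᵢ}`.
Keeping the largest summand, `M ≤ C + C m ⟨T⟩^{αᵢ+1} M^{βᵢ}`, and since `βᵢ < 1` this forces
`M ≤ max (2C) ((2Cm⟨T⟩^{αᵢ+1})^{1/(1-βᵢ)})`. Finally `F T ≤ M exp ‖H‖₁`, so
`K = 2 C exp ‖H‖₁ + 1` works.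
-/

open Real

lemma exists_sum_le_card_mul {ι R : Type*} [Fintype ι] [Nonempty ι] [Semiring R] [LinearOrder R]
    [IsOrderedAddMonoid R] (f : ι → R) : ∃ i, ∑ j, f j ≤ Fintype.card ι * f i := by
  obtain ⟨i, hi⟩ := Finite.exists_max f
  refine ⟨i, ?_⟩
  simpa [nsmul_eq_mul] using Finset.sum_le_card_nsmul Finset.univ f (f i) fun j _ => hi j

lemma le_max_of_le_add_mul_rpow {M c D b : ℝ} (hM : 0 ≤ M) (hD : 0 ≤ D) (hb : b < 1)
    (h : M ≤ c + D * M ^ b) : M ≤ max (2 * c) ((2 * D) ^ (1 / (1 - b))) := by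
  rcases le_or_gt M (2 * c) with hMc | hcM
  · exact le_max_of_le_left hMc
  refine le_max_of_le_right ?_
  rcases hM.eq_or_lt with rfl | hM
  · positivity
  have hb' : 0 < 1 - b := sub_pos.2 hb
  have hMb : M ^ (1 - b) ≤ 2 * D := by
    rw [rpow_sub hM, rpow_one, div_le_iff₀ (rpow_pos_of_pos hM b)]
    linarith
  calc M = (M ^ (1 - b)) ^ (1 / (1 - b)) := by
        rw [← rpow_mul hM.le, mul_one_div_cancel hb'.ne', rpow_one]
    _ ≤ (2 * D) ^ (1 / (1 - b)) := by gcongr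

lemma mul_max_le_rpow {E c a p : ℝ} (hE : 1 ≤ E) (hc : 0 ≤ c) (ha : 0 ≤ a) (hp : 1 ≤ p) :
    E * max (2 * c) ((2 * (c * a)) ^ p) ≤ (2 * c * E + 1 + (2 * c * E + 1) * a) ^ p := by
  set K := 2 * c * E + 1
  have hK : K ≤ K + K * a := le_add_of_nonneg_right (by positivity)
  have hKa : 2 * (c * a) * E ≤ K + K * a := by nlinarith
  have hb : K + K * a ≤ (K + K * a) ^ p := self_le_rpow_of_one_le (by nlinarith) hp
  rw [mul_max_of_nonneg _ _ (by positivity)]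
  refine max_le (by linarith) ?_
  calc E * (2 * (c * a)) ^ p ≤ E ^ p * (2 * (c * a)) ^ p := by
        gcongr; exact self_le_rpow_of_one_le hE hp
    _ = (2 * (c * a) * E) ^ p := by rw [← mul_rpow (by positivity) (by positivity), mul_comm E]
    _ ≤ (K + K * a) ^ p := by gcongr

lemma le_sqrt_one_add_sq (t : ℝ) : t ≤ √(1 + t ^ 2) :=
  (le_abs_self t).trans (abs_le_sqrt (by linarith))

lemma sqrt_one_add_sq_le_sqrt_one_add_sq {s t : ℝ} (hs : 0 ≤ s) (hst : s ≤ t) :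
    √(1 + s ^ 2) ≤ √(1 + t ^ 2) :=
  sqrt_le_sqrt (by gcongr)

lemma rpow_mul_exp_neg_le {x y b : ℝ} (hx : 0 ≤ x) (hy : 0 ≤ y) (hb : b ≤ 1) :
    x ^ b * exp (-y) ≤ (x * exp (-y)) ^ b := by
  rw [mul_rpow hx (exp_nonneg _), ← exp_mul]
  gcongr
  nlinarith

noncomputable def sublinearForcing {ι : Type*} [Fintype ι] (C : ℝ) (α β : ι → ℝ) (t x : ℝ) : ℝ :=
  C * ∑ i, √(1 + t ^ 2) ^ α i * x ^ β i

section sublinearForcing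

variable {ι : Type*} [Fintype ι] {C : ℝ} {α β : ι → ℝ}

lemma sublinearForcing_le_sublinearForcing (hC : 0 ≤ C) (hα : ∀ i, 0 ≤ α i) (hβ : ∀ i, 0 ≤ β i)
    {s t x y : ℝ} (hs : 0 ≤ s) (hst : s ≤ t) (hx : 0 ≤ x) (hxy : x ≤ y) :
    sublinearForcing C α β s x ≤ sublinearForcing C α β t y := by
  unfold sublinearForcing
  have := sqrt_one_add_sq_le_sqrt_one_add_sq hs hst
  gcongr with i
  · exact hα i
  · exact hβ i

lemma exp_neg_mul_sublinearForcing_le (hC : 0 ≤ C) (hβ : ∀ i, β i ≤ 1) {t x y : ℝ} (hx : 0 ≤ x)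
    (hy : 0 ≤ y) :
    exp (-y) * sublinearForcing C α β t x ≤ sublinearForcing C α β t (x * exp (-y)) := by
  unfold sublinearForcing
  rw [mul_left_comm, Finset.mul_sum]
  refine mul_le_mul_of_nonneg_left (Finset.sum_le_sum fun i _ => ?_) hC
  calc exp (-y) * (√(1 + t ^ 2) ^ α i * x ^ β i) = √(1 + t ^ 2) ^ α i * (x ^ β i * exp (-y)) := by
        ring
    _ ≤ √(1 + t ^ 2) ^ α i * (x * exp (-y)) ^ β i := by
        gcongr; exact rpow_mul_exp_neg_le hx hy (hβ i)

lemma mul_sublinearForcing_le (hC : 0 ≤ C) {t x : ℝ} (hx : 0 ≤ x) :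
    t * sublinearForcing C α β t x ≤ C * ∑ i, √(1 + t ^ 2) ^ (α i + 1) * x ^ β i := by
  unfold sublinearForcing
  rw [mul_left_comm, Finset.mul_sum]
  refine mul_le_mul_of_nonneg_left (Finset.sum_le_sum fun i _ => ?_) hC
  calc t * (√(1 + t ^ 2) ^ α i * x ^ β i) ≤ √(1 + t ^ 2) * (√(1 + t ^ 2) ^ α i * x ^ β i) := by
        gcongr; exact le_sqrt_one_add_sq t
    _ = √(1 + t ^ 2) ^ (α i + 1) * x ^ β i := by rw [rpow_add_one (by positivity)]; ring

end sublinearForcing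

section Primitive

variable {H : ℝ → ℝ}

lemma hasDerivAt_intervalIntegral_zero (hHc : ContinuousOn H (Ici 0))
    (hH : IntegrableOn H (Ioi 0)) {t : ℝ} (ht : 0 < t) :
    HasDerivAt (fun u => ∫ x in 0..u, H x) (H t) t := by
  refine intervalIntegral.integral_hasDerivAt_right ?_ ?_ (hHc.continuousAt (Ici_mem_nhds ht))
  · exact (intervalIntegrable_iff_integrableOn_Ioc_of_le ht.le).2 (hH.mono_set Ioc_subset_Ioi_self)
  · exact (hHc.mono Ioi_subset_Ici_self).stronglyMeasurableAtFilter isOpen_Ioi t ht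

lemma continuousOn_intervalIntegral_zero (hH : IntegrableOn H (Ioi 0)) {T : ℝ} (hT : 0 ≤ T) :
    ContinuousOn (fun u => ∫ x in 0..u, H x) (Icc 0 T) := by
  rw [← uIcc_of_le hT]
  refine intervalIntegral.continuousOn_primitive_interval ?_
  rw [uIcc_of_le hT, integrableOn_Icc_iff_integrableOn_Ioc]
  exact hH.mono_set Ioc_subset_Ioi_self

lemma intervalIntegral_zero_le_integral_Ioi (hH : IntegrableOn H (Ioi 0)) (hH0 : ∀ x, 0 ≤ H x)
    {t : ℝ} (ht : 0 ≤ t) : ∫ x in 0..t, H x ≤ ∫ x in Ioi 0, H x := by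
  rw [intervalIntegral.integral_of_le ht]
  exact setIntegral_mono_set hH (.of_forall hH0) Ioc_subset_Ioi_self.eventuallyLE

end Primitive

noncomputable def damped (F H : ℝ → ℝ) (t : ℝ) : ℝ :=
  F t * exp (-∫ s in 0..t, |H s|)

section damped

variable {F H : ℝ → ℝ}

lemma damped_zero : damped F H 0 = F 0 := by
  simp [damped]

lemma continuousOn_damped (hFc : ContinuousOn F (Ici 0)) (hH : IntegrableOn H (Ioi 0)) {T : ℝ}
    (hT : 0 ≤ T) : ContinuousOn (damped F H) (Icc 0 T) :=
  (hFc.mono Icc_subset_Ici_self).mul (continuousOn_intervalIntegral_zero hH.abs hT).neg.rexp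

lemma hasDerivAt_damped (hHc : ContinuousOn H (Ici 0)) (hH : IntegrableOn H (Ioi 0)) {t F' : ℝ}
    (ht : 0 < t) (hF : HasDerivAt F F' t) :
    HasDerivAt (damped F H) ((F' - |H t| * F t) * exp (-∫ s in 0..t, |H s|)) t := by
  have hexp := (hasDerivAt_intervalIntegral_zero hHc.abs hH.abs ht).fun_neg.exp
  exact (hF.fun_mul hexp).congr_deriv (by ring)

lemma le_mul_exp_of_damped_le (hH : IntegrableOn H (Ioi 0)) {t M : ℝ} (ht : 0 ≤ t)
    (hM : 0 ≤ M) (hFM : damped F H t ≤ M) : F t ≤ M * exp (∫ x in Ioi 0, |H x|) := by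
  have hF : F t = damped F H t * exp (∫ s in 0..t, |H s|) := by
    rw [damped, mul_assoc, ← exp_add, neg_add_cancel, exp_zero, mul_one]
  rw [hF]
  gcongr
  exact intervalIntegral_zero_le_integral_Ioi hH.abs (fun _ => abs_nonneg _) ht

end damped

section GronwallBound

variable {ι : Type*} [Fintype ι] {C : ℝ} {α β : ι → ℝ} {F H : ℝ → ℝ}

lemma deriv_damped_le (hHc : ContinuousOn H (Ici 0)) (hH : IntegrableOn H (Ioi 0)) (hC : 0 ≤ C)
    (hβ : ∀ i, β i ≤ 1) {t : ℝ} (ht : 0 < t) (hFd : DifferentiableAt ℝ F t) (hFt : 0 ≤ F t)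
    (hF' : |deriv F t| ≤ sublinearForcing C α β t (F t) + H t * F t) :
    deriv (damped F H) t ≤ sublinearForcing C α β t (damped F H t) := by
  have hh : 0 ≤ ∫ s in 0..t, |H s| := intervalIntegral.integral_nonneg ht.le fun _ _ => abs_nonneg _
  have hlin : deriv F t - |H t| * F t ≤ sublinearForcing C α β t (F t) := by
    have := mul_le_mul_of_nonneg_right (le_abs_self (H t)) hFt
    linarith [le_abs_self (deriv F t)]
  rw [(hasDerivAt_damped hHc hH ht hFd.hasDerivAt).deriv, damped]
  calc (deriv F t - |H t| * F t) * exp (-∫ s in 0..t, |H s|)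
      ≤ exp (-∫ s in 0..t, |H s|) * sublinearForcing C α β t (F t) := by
        rw [mul_comm]; gcongr
    _ ≤ _ := exp_neg_mul_sublinearForcing_le hC hβ hFt hh

lemma exists_le_mul_exp_of_abs_deriv_le (hHc : ContinuousOn H (Ici 0)) (hH : IntegrableOn H (Ioi 0))
    (hα : ∀ i, 0 ≤ α i) (hβ₀ : ∀ i, 0 ≤ β i) (hβ₁ : ∀ i, β i ≤ 1) (hC : 0 ≤ C)
    (hFc : ContinuousOn F (Ici 0)) (hFd : ∀ t ∈ Ioi (0 : ℝ), DifferentiableAt ℝ F t)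
    (hFpos : ∀ t ∈ Ioi (0 : ℝ), 0 ≤ F t) (hF0 : F 0 ≤ C)
    (hFineq : ∀ t ∈ Ioi (0 : ℝ), |deriv F t| ≤ sublinearForcing C α β t (F t) + H t * F t)
    {T : ℝ} (hT : 0 < T) :
    ∃ M, 0 ≤ M ∧ F T ≤ M * exp (∫ x in Ioi 0, |H x|) ∧
      M ≤ C + C * ∑ i, √(1 + T ^ 2) ^ (α i + 1) * M ^ β i := by
  have hGc := continuousOn_damped hFc hH hT.le
  obtain ⟨s, hs, hmax⟩ := isCompact_Icc.exists_isMaxOn (nonempty_Icc.2 hT.le) hGc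
  set M := damped F H s
  have hG : ∀ t ∈ Ioi 0, 0 ≤ damped F H t := fun t ht => mul_nonneg (hFpos t ht) (exp_nonneg _)
  have hM : 0 ≤ M := (hG T hT).trans (hmax ⟨hT.le, le_rfl⟩)
  refine ⟨M, hM, le_mul_exp_of_damped_le hH hT.le hM (hmax ⟨hT.le, le_rfl⟩), ?_⟩
  have hdiff : DifferentiableOn ℝ (damped F H) (interior (Icc 0 T)) := by
    rw [interior_Icc]
    intro t ht
    exact (hasDerivAt_damped hHc hH ht.1 (hFd t ht.1).hasDerivAt).differentiableAt
      |>.differentiableWithinAt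
  have hderiv : ∀ t ∈ interior (Icc 0 T), deriv (damped F H) t ≤ sublinearForcing C α β T M := by
    rw [interior_Icc]
    intro t ht
    exact (deriv_damped_le hHc hH hC hβ₁ ht.1 (hFd t ht.1) (hFpos t ht.1) (hFineq t ht.1)).trans
      (sublinearForcing_le_sublinearForcing hC hα hβ₀ ht.1.le ht.2.le (hG t ht.1)
        (hmax ⟨ht.1.le, ht.2.le⟩))
  have hmvt := (convex_Icc 0 T).image_sub_le_mul_sub_of_deriv_le hGc hdiff hderiv
    0 (left_mem_Icc.2 hT.le) s hs hs.1
  have hP : 0 ≤ sublinearForcing C α β T M := by unfold sublinearForcing; positivity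
  rw [damped_zero, sub_zero] at hmvt
  calc M ≤ C + T * sublinearForcing C α β T M := by nlinarith [hs.2]
    _ ≤ _ := add_le_add_right (mul_sublinearForcing_le hC hM) C

end GronwallBound

/-- nonlinear Gronwall-type lemma with sublinear powers of `F`. -/
theorem nonlinear_gronwall (m : ℕ) (hm : 0 < m)
    (H : ℝ → ℝ) (hHc : ContinuousOn H (Ici 0)) (hH1 : IntegrableOn H (Ioi 0))
    (α β : Fin m → ℝ) (hα : ∀ i, 0 < α i) (hβ : ∀ i, β i ∈ Ico (0 : ℝ) 1)
    (C : ℝ) (hC : 0 < C)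
    (F : ℝ → ℝ) (hFc : ContinuousOn F (Ici 0)) (hFd : ∀ t ∈ Ioi (0 : ℝ), DifferentiableAt ℝ F t)
    (hFpos : ∀ t ∈ Ioi (0 : ℝ), 0 ≤ F t) (hF0 : F 0 ≤ C)
    (hFineq : ∀ t ∈ Ioi (0 : ℝ),
      |deriv F t| ≤ C * (∑ i, Real.sqrt (1 + t ^ 2) ^ (α i) * (F t) ^ (β i)) + H t * F t) :
    ∃ K > 0, ∀ t ∈ Ioi (0 : ℝ), ∃ i : Fin m,
      F t ≤ (K + K * m * Real.sqrt (1 + t ^ 2) ^ (α i + 1)) ^ ((1 : ℝ) / (1 - β i)) := by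
  have : Nonempty (Fin m) := ⟨⟨0, hm⟩⟩
  set E := exp (∫ x in Ioi 0, |H x|)
  have hE : 1 ≤ E := one_le_exp (setIntegral_nonneg measurableSet_Ioi fun _ _ => abs_nonneg _)
  refine ⟨2 * C * E + 1, by positivity, fun T hT => ?_⟩
  obtain ⟨M, hM, hFM, hMC⟩ := exists_le_mul_exp_of_abs_deriv_le hHc hH1 (fun i => (hα i).le)
    (fun i => (hβ i).1) (fun i => (hβ i).2.le) hC.le hFc hFd hFpos hF0 hFineq hT
  obtain ⟨i, hi⟩ := exists_sum_le_card_mul fun i : Fin m => √(1 + T ^ 2) ^ (α i + 1) * M ^ β i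
  rw [Fintype.card_fin] at hi
  refine ⟨i, ?_⟩
  have hMi : M ≤ C + C * (m * √(1 + T ^ 2) ^ (α i + 1)) * M ^ β i := by
    linarith [mul_le_mul_of_nonneg_left hi hC.le]
  have hp : 1 ≤ 1 / (1 - β i) := one_le_one_div (by linarith [(hβ i).2]) (by linarith [(hβ i).1])
  calc F T ≤ E * M := hFM.trans_eq (mul_comm M E)
    _ ≤ E * max (2 * C) ((2 * (C * (m * √(1 + T ^ 2) ^ (α i + 1)))) ^ (1 / (1 - β i))) := by
        gcongr; exact le_max_of_le_add_mul_rpow hM (by positivity) (hβ i).2 hMi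
    _ ≤ _ := by
        rw [mul_assoc _ (m : ℝ)]
        exact mul_max_le_rpow hE hC.le (by positivity) hp
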